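/- arXiv:1810.02963 — 2 statements merged into one kernel-verified Lean document; each statement's English description precedes it below -/
import Mathlib

section
/- There exists a constant c > 0 such that for every sufficiently large integer Δ there is a finite simple graph G with maximum degree at most Δ and local boxicity lbox(G) ≥ c · Δ / log₂ Δ. -/
open Classical

/-- A finite simple graph is an interval graph if each vertex can be assigned a
closed real interval so that distinct vertices are adjacent iff their intervals
intersect. -/
def IsIntervalGraph {V : Type} (I : SimpleGraph V) : Prop :=
  ∃ l r : V → ℝ, ∀ u v : V, u ≠ v →
    (I.Adj u v ↔ (Set.Icc (l u) (r u) ∩ Set.Icc (l v) (r v)).Nonempty)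

/-- A vertex is universal if it is adjacent to every other vertex. -/
def IsUniversal {V : Type} (I : SimpleGraph V) (v : V) : Prop :=
  ∀ u : V, u ≠ v → I.Adj v u

/-- `G` has a local box representation where every vertex is non-universal in at
most `t` of the interval graphs. -/
def LocalBoxRep {V : Type} (G : SimpleGraph V) (t : ℕ) : Prop :=
  ∃ (k : ℕ) (I : Fin k → SimpleGraph V),
    (∀ i, IsIntervalGraph (I i)) ∧
    (∀ u v : V, u ≠ v → (G.Adj u v ↔ ∀ i, (I i).Adj u v)) ∧
    (∀ v : V, {i : Fin k | ¬ IsUniversal (I i) v}.ncard ≤ t)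

/-- Local boxicity of a graph. -/
noncomputable def lbox {V : Type} (G : SimpleGraph V) : ℕ :=
  sInf {t : ℕ | LocalBoxRep G t}

/-- Iterated base-2 logarithm: the number of times `logb 2` must be applied
before the result becomes at most 1. -/
noncomputable def logStar (x : ℝ) : ℕ :=
  sInf {n : ℕ | (Real.logb 2)^[n] x ≤ 1}

/-- A graph is claw-free if it has no induced `K_{1,3}`. -/
def ClawFree {V : Type} (G : SimpleGraph V) : Prop :=
  ∀ v a b c : V, a ≠ b → a ≠ c → b ≠ c →
    ¬ (G.Adj v a ∧ G.Adj v b ∧ G.Adj v c ∧ ¬ G.Adj a b ∧ ¬ G.Adj a c ∧ ¬ G.Adj b c)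

/-- Comparability graph of a poset. -/
def compGraph (α : Type) [PartialOrder α] : SimpleGraph α where
  Adj x y := x ≠ y ∧ (x ≤ y ∨ y ≤ x)
  symm := by
    constructor
    intro x y h
    exact ⟨h.1.symm, h.2.symm⟩
  loopless := by
    constructor
    intro x h
    exact h.1 rfl

/-- A partial linear extension of a poset, given as a duplicate-free list
(ordered by position) which extends the partial order on its elements. -/
def IsPLE {α : Type} [PartialOrder α] [DecidableEq α] (L : List α) : Prop :=
  L.Nodup ∧ ∀ x ∈ L, ∀ y ∈ L, x ≤ y → L.idxOf x ≤ L.idxOf y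

/-- `x` appears below `y` in the list `L`. -/
def Below {α : Type} [DecidableEq α] (L : List α) (x y : α) : Prop :=
  x ∈ L ∧ y ∈ L ∧ L.idxOf x < L.idxOf y

/-- A local realizer of a poset: a family of ple's such that every strict
relation is witnessed, and every incomparable pair is reversed twice. -/
def IsLocalRealizer {α : Type} [PartialOrder α] [DecidableEq α] {k : ℕ}
    (L : Fin k → List α) : Prop :=
  (∀ i, IsPLE (L i)) ∧
  (∀ x y : α, x < y → ∃ i, Below (L i) x y) ∧
  (∀ x y : α, ¬ x ≤ y → ¬ y ≤ x →
    (∃ i, Below (L i) x y) ∧ (∃ i, Below (L i) y x))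

/-- Local dimension of a poset: the least `t` such that some local realizer has
every element in at most `t` ple's. -/
noncomputable def ldim (α : Type) [PartialOrder α] [DecidableEq α] : ℕ :=
  sInf {t : ℕ | ∃ (k : ℕ) (L : Fin k → List α), IsLocalRealizer L ∧
    ∀ x : α, {i : Fin k | x ∈ L i}.ncard ≤ t}

/-- Product dimension of a graph. -/
noncomputable def prodDim {V : Type} (G : SimpleGraph V) : ℕ :=
  sInf {k : ℕ | 0 < k ∧ ∃ f : V → Fin k → ℕ,
    ∀ u v : V, u ≠ v → (G.Adj u v ↔ ∀ i, f u i ≠ f v i)}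

/-- A poset has height at most 2: every chain has at most 2 elements. -/
def HeightAtMostTwo (α : Type) [Preorder α] : Prop :=
  ∀ x y z : α, x ≤ y → y ≤ z → x = y ∨ y = z

/-!
Counting. Replacing real endpoints by their ranks, an interval graph on `n` vertices is given by
intervals with endpoints in `Fin (2n)`; complete interval graphs can be dropped, and universal
vertices need no interval. So a representation witnessing `lbox ≤ t` is encoded by at most `t n`
labelled intervals taken from a set of size `4 t n⁴`, and at most
`(4 t n⁴ + 1) ^ (t n) = 2 ^ O(t n log n)` graphs on `n` vertices have `lbox ≤ t`. For
`t = ⌊Δ / (32 log₂ Δ)⌋` and `n = Δ + 1` this is less than the number `2 ^ (n choose 2)` of graphs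
on `n` vertices, all of which have maximum degree at most `Δ`.
-/

section IntervalGraphs

variable {V : Type} {α : Type*} [LinearOrder α]

def intervalGraph (l r : V → α) : SimpleGraph V where
  Adj u v := u ≠ v ∧ (Set.Icc (l u) (r u) ∩ Set.Icc (l v) (r v)).Nonempty
  symm := ⟨fun _ _ h => ⟨h.1.symm, by rw [Set.inter_comm]; exact h.2⟩⟩
  loopless := ⟨fun _ h => h.1 rfl⟩

lemma isIntervalGraph_intervalGraph (l r : V → ℝ) : IsIntervalGraph (intervalGraph l r) :=
  ⟨l, r, fun _ _ huv => by simp [intervalGraph, huv]⟩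

lemma exists_fin_le_iff {ι : Type*} [Fintype ι] {n : ℕ} (hn : Fintype.card ι ≤ n) (f : ι → α) :
    ∃ g : ι → Fin n, ∀ i j, g i ≤ g j ↔ f i ≤ f j := by
  set E := Finset.univ.image f
  have hE : E.card ≤ n := Finset.card_image_le.trans hn
  refine ⟨fun i => Fin.castLE hE ((E.orderIsoOfFin rfl).symm
    ⟨f i, Finset.mem_image_of_mem f (Finset.mem_univ i)⟩), fun i j => ?_⟩
  rw [Fin.castLE_le_castLE_iff, OrderIso.le_iff_le, Subtype.mk_le_mk]

lemma Icc_inter_Icc_nonempty_comp_iff {ι β : Type*} [LinearOrder β] {f : ι → α} {g : ι → β}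
    (hg : ∀ i j, g i ≤ g j ↔ f i ≤ f j) (a b c d : ι) :
    (Set.Icc (g a) (g b) ∩ Set.Icc (g c) (g d)).Nonempty ↔
      (Set.Icc (f a) (f b) ∩ Set.Icc (f c) (f d)).Nonempty := by
  simp only [Set.Icc_inter_Icc, Set.nonempty_Icc, max_le_iff, le_min_iff, hg]

lemma IsIntervalGraph.exists_eq_intervalGraph_fin [Fintype V] {I : SimpleGraph V}
    (hI : IsIntervalGraph I) :
    ∃ l r : V → Fin (2 * Fintype.card V), I = intervalGraph l r := by
  obtain ⟨l, r, hlr⟩ := hI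
  obtain ⟨g, hg⟩ := exists_fin_le_iff (n := 2 * Fintype.card V) (by simp [two_mul])
    (Sum.elim l r)
  refine ⟨g ∘ Sum.inl, g ∘ Sum.inr, ?_⟩
  ext u v
  by_cases huv : u = v
  · subst huv; simp
  · simp only [intervalGraph, ne_eq, huv, not_false_eq_true, true_and, hlr u v huv]
    exact (Icc_inter_Icc_nonempty_comp_iff hg (.inl u) (.inr u) (.inl v) (.inr v)).symm

end IntervalGraphs

/-- Each `(j, v, a, b) ∈ S` puts the interval `[a, b]` on `v` in the `j`-th interval graph;
a vertex carrying no interval labelled `j` is universal in that graph. -/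
def sparseIntervalGraph {V κ : Type} {α : Type*} [LinearOrder α] (S : Finset (κ × V × α × α)) :
    SimpleGraph V where
  Adj u v := u ≠ v ∧ ∀ j a b c d, (j, u, a, b) ∈ S → (j, v, c, d) ∈ S →
    (Set.Icc a b ∩ Set.Icc c d).Nonempty
  symm := ⟨fun _ _ h => ⟨h.1.symm, fun j a b c d hu hv => by
    rw [Set.inter_comm]; exact h.2 j c d a b hv hu⟩⟩
  loopless := ⟨fun _ h => h.1 rfl⟩

section LocalBoxicity

variable {V : Type} {G : SimpleGraph V}

lemma LocalBoxRep.mono {s t : ℕ} (h : LocalBoxRep G s) (hst : s ≤ t) : LocalBoxRep G t := by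
  obtain ⟨k, I, hI, hG, hs⟩ := h
  exact ⟨k, I, hI, hG, fun v => (hs v).trans hst⟩

/-- `a` gets `[0, 1]`, its non-neighbours `[2, 3]` and all other vertices `[0, 3]`, so that the
only non-edges are the non-edges of `G` at `a`. -/
noncomputable def starIntervalGraph (G : SimpleGraph V) (a : V) : SimpleGraph V :=
  intervalGraph (fun v => if v ≠ a ∧ ¬G.Adj a v then (2 : ℝ) else 0)
    (fun v => if v = a then (1 : ℝ) else 3)

lemma starIntervalGraph_adj {a u v : V} :
    (starIntervalGraph G a).Adj u v ↔ u ≠ v ∧ (u = a → G.Adj u v) ∧ (v = a → G.Adj u v) := by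
  simp only [starIntervalGraph, intervalGraph, Set.Icc_inter_Icc, Set.nonempty_Icc]
  by_cases hu : u = a <;> by_cases hv : v = a <;> subst_vars <;>
    split_ifs <;> simp_all [G.adj_comm] <;> norm_num

lemma localBoxRep_card [Fintype V] (G : SimpleGraph V) : LocalBoxRep G (Fintype.card V) := by
  refine ⟨Fintype.card V, fun i => starIntervalGraph G ((Fintype.equivFin V).symm i),
    fun i => isIntervalGraph_intervalGraph _ _, fun u v huv => ?_, fun v => ?_⟩
  · simp only [starIntervalGraph_adj]
    exact ⟨fun h _ => ⟨huv, fun _ => h, fun _ => h⟩,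
      fun h => (h (Fintype.equivFin V u)).2.1 (by simp)⟩
  · simpa using Set.ncard_le_card
      {i | ¬IsUniversal (starIntervalGraph G ((Fintype.equivFin V).symm i)) v}

lemma lbox_le_iff [Fintype V] {t : ℕ} : lbox G ≤ t ↔ LocalBoxRep G t :=
  ⟨fun h => (Nat.sInf_mem (s := {t | LocalBoxRep G t}) ⟨_, localBoxRep_card G⟩).mono h,
    fun h => Nat.sInf_le h⟩

variable [Fintype V]

lemma card_filter_not_isUniversal_le {k t : ℕ} {I : Fin k → SimpleGraph V}
    (ht : ∀ v, {i | ¬IsUniversal (I i) v}.ncard ≤ t) :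
    (Finset.univ.filter fun p : Fin k × V => ¬IsUniversal (I p.1) p.2).card ≤
      t * Fintype.card V := by
  rw [Finset.card_filter, Fintype.sum_prod_type_right]
  calc ∑ v, ∑ i, (if ¬IsUniversal (I i) v then 1 else 0)
      ≤ ∑ _v : V, t := Finset.sum_le_sum fun v _ => by
        rw [← Finset.card_filter, ← Set.ncard_coe_finset]
        simpa using ht v
    _ = t * Fintype.card V := by simp [mul_comm]

/-- Complete interval graphs can be dropped; each remaining one has a non-universal vertex. -/
lemma LocalBoxRep.exists_le_mul_card {t : ℕ} (h : LocalBoxRep G t) :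
    ∃ (k : ℕ) (I : Fin k → SimpleGraph V), k ≤ t * Fintype.card V ∧
      (∀ i, IsIntervalGraph (I i)) ∧ (∀ u v, u ≠ v → (G.Adj u v ↔ ∀ i, (I i).Adj u v)) ∧
      ∀ v, {i | ¬IsUniversal (I i) v}.ncard ≤ t := by
  obtain ⟨k, I, hI, hG, ht⟩ := h
  set J := (Finset.univ.filter fun p : Fin k × V => ¬IsUniversal (I p.1) p.2).image Prod.fst
  set e := J.orderEmbOfFin rfl
  have he : ∀ i, i ∈ Set.range e ↔ ∃ v, ¬IsUniversal (I i) v := by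
    simp [e, Finset.range_orderEmbOfFin, J]
  refine ⟨J.card, I ∘ e, Finset.card_image_le.trans (card_filter_not_isUniversal_le ht),
    fun i => hI _, fun u v huv => ?_, fun v => ?_⟩
  · rw [hG u v huv]
    refine ⟨fun h i => h _, fun h i => ?_⟩
    by_cases hi : ∃ w, ¬IsUniversal (I i) w
    · obtain ⟨j, rfl⟩ := (he i).2 hi
      exact h j
    · push Not at hi
      exact hi u v huv.symm
  · calc {i | ¬IsUniversal ((I ∘ e) i) v}.ncard = (e ⁻¹' {i | ¬IsUniversal (I i) v}).ncard := rfl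
      _ = {i | ¬IsUniversal (I i) v}.ncard :=
        Set.ncard_preimage_of_injective_subset_range e.injective fun i hi => (he i).2 ⟨v, hi⟩
      _ ≤ t := ht v

lemma LocalBoxRep.exists_eq_sparseIntervalGraph {t : ℕ} (h : LocalBoxRep G t) :
    ∃ S : Finset (Fin (t * Fintype.card V) × V × Fin (2 * Fintype.card V) ×
        Fin (2 * Fintype.card V)),
      S.card ≤ t * Fintype.card V ∧ G = sparseIntervalGraph S := by
  obtain ⟨k, I, hk, hI, hG, ht⟩ := h.exists_le_mul_card
  choose l r hlr using fun i => (hI i).exists_eq_intervalGraph_fin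
  set T := Finset.univ.filter fun p : Fin k × V => ¬IsUniversal (I p.1) p.2
  refine ⟨T.image fun p => (Fin.castLE hk p.1, p.2, l p.1 p.2, r p.1 p.2),
    Finset.card_image_le.trans (card_filter_not_isUniversal_le ht), ?_⟩
  ext u v
  by_cases huv : u = v
  · simp [huv]
  rw [hG u v huv]
  simp only [sparseIntervalGraph, ne_eq, huv, not_false_eq_true, true_and, Finset.mem_image, T,
    Finset.mem_filter, Finset.mem_univ, Prod.mk.injEq, Prod.exists]
  constructor
  · rintro hadj j a b c d ⟨i, u', hu, rfl, rfl, rfl, rfl⟩ ⟨i', v', hv, hi', rfl, rfl, rfl⟩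
    cases Fin.castLE_injective hk hi'
    have hadj_i := hadj i
    rw [hlr i] at hadj_i
    exact hadj_i.2
  · intro H i
    by_cases hu : IsUniversal (I i) u
    · exact hu v (Ne.symm huv)
    by_cases hv : IsUniversal (I i) v
    · exact (hv u huv).symm
    rw [hlr i]
    exact ⟨huv, H _ _ _ _ _ ⟨i, u, hu, rfl, rfl, rfl, rfl⟩ ⟨i, v, hv, rfl, rfl, rfl, rfl⟩⟩

end LocalBoxicity

lemma card_filter_card_le_le_pow {X : Type*} [Fintype X] (s : ℕ) :
    (Finset.univ.filter fun S : Finset X => S.card ≤ s).card ≤ (Fintype.card X + 1) ^ s := by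
  calc _ ≤ (Finset.univ.image fun f : Fin s → Option X =>
        (Finset.univ.image f).eraseNone).card := by
        refine Finset.card_le_card fun S hS => Finset.mem_image.2
          ⟨fun i => S.toList[(i : ℕ)]?, Finset.mem_univ _, ?_⟩
        have hS : S.toList.length ≤ s := by simpa using hS
        ext x
        simp only [Finset.mem_eraseNone, Finset.mem_image, Finset.mem_univ, true_and]
        rw [← Finset.mem_toList, List.mem_iff_getElem?]
        refine ⟨fun ⟨i, hi⟩ => ⟨i, hi⟩, fun ⟨n, hn⟩ => ⟨⟨n, ?_⟩, hn⟩⟩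
        exact (List.getElem?_eq_some_iff.1 hn).1.trans_le hS
    _ ≤ Fintype.card (Fin s → Option X) := Finset.card_image_le
    _ = (Fintype.card X + 1) ^ s := by simp

lemma two_pow_choose_le_card_simpleGraph {V : Type} [Fintype V] :
    2 ^ (Fintype.card V).choose 2 ≤ Fintype.card (SimpleGraph V) := by
  rw [← Sym2.card_subtype_not_diag, ← Fintype.card_set]
  refine Fintype.card_le_of_injective (fun s => SimpleGraph.fromEdgeSet (Subtype.val '' s))
    fun s s' h => ?_
  have hdiag : ∀ s : Set {z : Sym2 V // ¬z.IsDiag},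
      Subtype.val '' s \ Sym2.diagSet = Subtype.val '' s := by
    intro s; ext z; simp
  have hedges := congrArg SimpleGraph.edgeSet h
  simp only [SimpleGraph.edgeSet_fromEdgeSet, hdiag] at hedges
  exact Set.image_injective.2 Subtype.val_injective hedges

section Counting

variable {V : Type} [Fintype V]

lemma card_filter_localBoxRep_le (t : ℕ) :
    (Finset.univ.filter fun G : SimpleGraph V => LocalBoxRep G t).card ≤
      (t * Fintype.card V * (Fintype.card V * (2 * Fintype.card V * (2 * Fintype.card V))) + 1) ^
        (t * Fintype.card V) := by
  calc _ ≤ ((Finset.univ.filter fun S => S.card ≤ t * Fintype.card V).image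
        sparseIntervalGraph).card := by
        refine Finset.card_le_card fun G hG => ?_
        obtain ⟨S, hS, rfl⟩ := (Finset.mem_filter.1 hG).2.exists_eq_sparseIntervalGraph
        exact Finset.mem_image_of_mem _ (by simpa using hS)
    _ ≤ _ := Finset.card_image_le
    _ ≤ _ := card_filter_card_le_le_pow _
    _ = _ := by simp [Fintype.card_prod]

lemma exists_lt_lbox {t : ℕ}
    (h : (t * Fintype.card V * (Fintype.card V * (2 * Fintype.card V * (2 * Fintype.card V))) +
        1) ^ (t * Fintype.card V) < 2 ^ (Fintype.card V).choose 2) :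
    ∃ G : SimpleGraph V, t < lbox G := by
  by_contra! hle
  have hall : (Finset.univ.filter fun G : SimpleGraph V => LocalBoxRep G t) = Finset.univ :=
    Finset.filter_true_of_mem fun G _ => lbox_le_iff.1 (hle G)
  have hcard := card_filter_localBoxRep_le (V := V) t
  rw [hall, Finset.card_univ] at hcard
  exact (h.trans_le two_pow_choose_le_card_simpleGraph).not_ge hcard

end Counting

lemma pow_lt_two_pow_choose {Δ t : ℕ} (hΔ : 4 ≤ Δ) (ht : 32 * Nat.log 2 Δ * t ≤ Δ) :
    (t * (Δ + 1) * ((Δ + 1) * (2 * (Δ + 1) * (2 * (Δ + 1)))) + 1) ^ (t * (Δ + 1)) <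
      2 ^ (Δ + 1).choose 2 := by
  set L := Nat.log 2 Δ
  set N := Δ + 1 with hN_def
  have hL : 1 ≤ L := Nat.log_pos (by norm_num) (by omega)
  have hN : N ≤ 2 ^ (L + 1) := Nat.lt_pow_succ_log_self (by norm_num) Δ
  have hbase : t * N * (N * (2 * N * (2 * N))) + 1 ≤ 2 ^ (6 * (L + 1)) :=
    calc _ ≤ N * N * (N * (2 * N * (2 * N))) + 1 := by
          gcongr; exact ((Nat.le_mul_of_pos_left t (by omega : 0 < 32 * L)).trans ht).trans (by omega)
      _ = 4 * N ^ 5 + 1 := by ring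
      _ ≤ N * N ^ 5 := by nlinarith [Nat.one_le_pow 5 N (by omega)]
      _ = N ^ 6 := by ring
      _ ≤ (2 ^ (L + 1)) ^ 6 := by gcongr
      _ = 2 ^ (6 * (L + 1)) := by ring
  have hexp : 6 * (L + 1) * (t * N) < N.choose 2 := by
    have h1 : 6 * (L + 1) * (t * N) ≤ 12 * (L * t * N) :=
      calc _ ≤ 6 * (2 * L) * (t * N) := by gcongr; omega
        _ = _ := by ring
    have h2 : 32 * (L * t * N) ≤ Δ * N := by nlinarith
    have h3 : N.choose 2 = Δ * N / 2 := by
      rw [Nat.choose_two_right, mul_comm]; rfl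
    have h4 : 8 ≤ Δ * N := by nlinarith
    omega
  calc _ ≤ (2 ^ (6 * (L + 1))) ^ (t * N) := by gcongr
    _ = 2 ^ (6 * (L + 1) * (t * N)) := by rw [← pow_mul]
    _ < 2 ^ N.choose 2 := Nat.pow_lt_pow_right (by norm_num) hexp

lemma div_logb_lt_of_div_lt {Δ m : ℕ} (hΔ : 2 ≤ Δ) (h : Δ / (32 * Nat.log 2 Δ) < m) :
    1 / 32 * (Δ : ℝ) / Real.logb 2 Δ < m := by
  have hL : (1 : ℝ) ≤ Nat.log 2 Δ := by exact_mod_cast Nat.log_pos (by norm_num) hΔ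
  calc 1 / 32 * (Δ : ℝ) / Real.logb 2 Δ = Δ / (32 * Real.logb 2 Δ) := by ring
    _ ≤ Δ / ((32 * Nat.log 2 Δ : ℕ) : ℝ) := by
        push_cast
        gcongr
        exact Real.natLog_le_logb Δ 2
    _ < ⌊(Δ : ℝ) / ((32 * Nat.log 2 Δ : ℕ) : ℝ)⌋₊ + 1 := Nat.lt_floor_add_one _
    _ = (Δ / (32 * Nat.log 2 Δ) : ℕ) + 1 := by rw [Nat.floor_div_eq_div]
    _ ≤ m := by exact_mod_cast h

/-- ∃ c > 0 such that for every sufficiently large Δ there is a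
finite simple graph with maximum degree ≤ Δ and lbox ≥ c·Δ/log₂ Δ. -/
theorem stmt4 : ∃ c : ℝ, 0 < c ∧ ∃ Δ₀ : ℕ, ∀ Δ : ℕ, Δ₀ ≤ Δ →
    ∃ (V : Type) (_ : Fintype V) (G : SimpleGraph V),
      (∀ v : V, (G.neighborSet v).ncard ≤ Δ) ∧
      c * (Δ : ℝ) / Real.logb 2 (Δ : ℝ) ≤ (lbox G : ℝ) := by
  refine ⟨1 / 32, by norm_num, 4, fun Δ hΔ => ?_⟩
  obtain ⟨G, hG⟩ := exists_lt_lbox (V := Fin (Δ + 1)) (t := Δ / (32 * Nat.log 2 Δ))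
    (by simpa using pow_lt_two_pow_choose hΔ (Nat.mul_div_le Δ _))
  refine ⟨Fin (Δ + 1), inferInstance, G, fun v => ?_, (div_logb_lt_of_div_lt (by omega) hG).le⟩
  have hv : G.neighborSet v ≠ Set.univ := fun h => G.irrefl (h ▸ Set.mem_univ v :)
  simpa [Nat.lt_succ_iff] using Set.ncard_lt_card hv
end

section
/- Let G be a finite simple claw-free graph with maximum degree Δ ≥ 1. Then lbox(G) ≤ 3Δ. -/
/-!
Colour `G` greedily with `Δ + 1` colours. For two colours, the subgraph induced by their two
colour classes is bipartite, hence triangle-free, and being claw-free it has maximum degree at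
most 2: it is a disjoint union of paths and cycles. Such a graph is the intersection of two
interval graphs: lay its paths and cycles out one after the other on the line, a unit interval
per vertex, except that the last vertex of each cycle spans its whole cycle; the second family
does the same with every component reversed. Giving every vertex outside the two colour classes
an interval that covers everything, a vertex is non-universal only in the two interval graphs of
each of the `Δ` pairs of colours containing its own colour, so `lbox G ≤ 2 * Δ`.
-/

open Classical

section Intervals

variable {V : Type}

def Meets (p q : ℕ × ℕ) : Prop := max p.1 q.1 ≤ min p.2 q.2

theorem Meets.symm {p q : ℕ × ℕ} (h : Meets p q) : Meets q p := by
  unfold Meets at *; omega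

def natIntervalGraph (p : V → ℕ × ℕ) : SimpleGraph V where
  Adj u v := u ≠ v ∧ Meets (p u) (p v)
  symm := ⟨fun _ _ h => ⟨h.1.symm, by unfold Meets at *; omega⟩⟩
  loopless := ⟨fun _ h => h.1 rfl⟩

theorem isIntervalGraph_natIntervalGraph (p : V → ℕ × ℕ) :
    IsIntervalGraph (natIntervalGraph p) := by
  refine ⟨fun v => (p v).1, fun v => (p v).2, fun u v huv => ?_⟩
  simp only [natIntervalGraph, Meets, Set.Icc_inter_Icc, Set.nonempty_Icc, ne_eq, huv,
    not_false_eq_true, true_and]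
  norm_cast

variable [Fintype V] (S : Set V) (p : S → ℕ × ℕ)

noncomputable def extendIntervals (v : V) : ℕ × ℕ :=
  if h : v ∈ S then p ⟨v, h⟩ else (0, ∑ s, (p s).2)

theorem extendIntervals_of_mem {v : V} (hv : v ∈ S) : extendIntervals S p v = p ⟨v, hv⟩ :=
  dif_pos hv

theorem isUniversal_extendIntervals (hp : ∀ s, (p s).1 ≤ (p s).2) {v : V} (hv : v ∉ S) :
    IsUniversal (natIntervalGraph (extendIntervals S p)) v := by
  intro u hu
  refine ⟨hu.symm, ?_⟩
  rw [extendIntervals, dif_neg hv]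
  by_cases huS : u ∈ S
  · have hle := Finset.single_le_sum (f := fun s => (p s).2) (fun _ _ => Nat.zero_le _)
      (Finset.mem_univ ⟨u, huS⟩)
    have := hp ⟨u, huS⟩
    rw [extendIntervals_of_mem S p huS]
    unfold Meets
    simp only at hle ⊢
    omega
  · rw [extendIntervals, dif_neg huS]
    unfold Meets
    omega

end Intervals

section Lists

variable {V : Type}

def Consecutive (ℓ : List V) (x y : V) : Prop := [x, y] <:+: ℓ ∨ [y, x] <:+: ℓ

theorem Consecutive.mono {ℓ ℓ' : List V} {x y : V} (h : Consecutive ℓ x y) (hℓ : ℓ <:+: ℓ') :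
    Consecutive ℓ' x y :=
  h.imp (·.trans hℓ) (·.trans hℓ)

theorem Consecutive.of_eq_or_reverse {ℓ ℓ' : List V} {x y : V} (h : Consecutive ℓ x y)
    (hℓ : ℓ' = ℓ ∨ ℓ' = ℓ.reverse) : Consecutive ℓ' x y := by
  rcases hℓ with rfl | rfl
  · exact h
  · rcases h with h | h
    · exact Or.inr (by simpa using List.reverse_infix.mpr h)
    · exact Or.inl (by simpa using List.reverse_infix.mpr h)

theorem List.Perm.of_eq_or_reverse {ℓ ℓ' : List V} (hℓ : ℓ' = ℓ ∨ ℓ' = ℓ.reverse) : ℓ'.Perm ℓ := by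
  rcases hℓ with rfl | rfl
  exacts [List.Perm.refl _, List.reverse_perm _]

theorem exists_eq_or_reverse_getLast? {ℓ : List V} {u : V}
    (h : ℓ.head? = some u ∨ ℓ.getLast? = some u) :
    ∃ p, (p = ℓ ∨ p = ℓ.reverse) ∧ p.getLast? = some u := by
  rcases h with h | h
  · exact ⟨_, Or.inr rfl, by simpa using h⟩
  · exact ⟨_, Or.inl rfl, h⟩

variable [DecidableEq V]

theorem List.IsChain.rel_of_idxOf_eq_succ {R : V → V → Prop} {ℓ : List V} {x y : V}
    (h : ℓ.IsChain R) (hy : y ∈ ℓ) (hxy : ℓ.idxOf y = ℓ.idxOf x + 1) : R x y := by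
  have hyl := List.idxOf_lt_length_iff.mpr hy
  have := List.isChain_iff_getElem.mp h (ℓ.idxOf x) (by omega)
  have hy' : ℓ[ℓ.idxOf x + 1] = y := by simpa [hxy] using List.getElem_idxOf hyl
  simpa [hy'] using this

theorem List.Nodup.idxOf_eq_succ_of_infix {ℓ : List V} {x y : V} (hnd : ℓ.Nodup)
    (h : [x, y] <:+: ℓ) : ℓ.idxOf y = ℓ.idxOf x + 1 := by
  obtain ⟨s, t, rfl⟩ := h
  have hnd' : (s ++ x :: y :: t).Nodup := by simpa using hnd
  simp only [List.nodup_append, List.nodup_cons, List.mem_cons, not_or] at hnd'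
  have hxs : x ∉ s := fun hx => hnd'.2.2 x hx x (by simp) rfl
  have hys : y ∉ s := fun hy => hnd'.2.2 y hy y (by simp) rfl
  simp [List.idxOf_append_of_notMem hxs, List.idxOf_append_of_notMem hys, hnd'.2.1.1.1]

theorem List.Nodup.idxOf_add_one_of_getLast? {ℓ : List V} {x : V} (hnd : ℓ.Nodup)
    (h : ℓ.getLast? = some x) : ℓ.idxOf x + 1 = ℓ.length := by
  obtain ⟨s, rfl⟩ := List.getLast?_eq_some_iff.mp h
  have hxs : x ∉ s := by simpa using (List.nodup_append.mp hnd).2.2 x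
  simp [List.idxOf_append_of_notMem hxs]

theorem List.idxOf_eq_zero_of_head? {ℓ : List V} {x : V} (h : ℓ.head? = some x) :
    ℓ.idxOf x = 0 := by
  obtain ⟨s, rfl⟩ := List.head?_eq_some_iff.mp h
  simp

theorem List.Nodup.head?_ne_getLast? {ℓ : List V} {a b : V} (hnd : ℓ.Nodup)
    (h2 : 2 ≤ ℓ.length) (ha : ℓ.head? = some a) (hb : ℓ.getLast? = some b) : a ≠ b := by
  rintro rfl
  have := hnd.idxOf_add_one_of_getLast? hb
  have := List.idxOf_eq_zero_of_head? ha
  omega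

end Lists

section Paths

open SimpleGraph

variable {V : Type} {K : SimpleGraph V}

theorem isChain_reverse_adj {ℓ : List V} : ℓ.reverse.IsChain K.Adj ↔ ℓ.IsChain K.Adj := by
  simp_rw [List.isChain_reverse, SimpleGraph.adj_comm]

theorem List.IsChain.of_eq_or_reverse {ℓ ℓ' : List V} (h : ℓ.IsChain K.Adj)
    (hℓ : ℓ' = ℓ ∨ ℓ' = ℓ.reverse) : ℓ'.IsChain K.Adj := by
  rcases hℓ with rfl | rfl
  exacts [h, isChain_reverse_adj.mpr h]

theorem head?_or_getLast?_of_subsingleton {ℓ : List V} {u : V} (hnd : ℓ.Nodup)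
    (hch : ℓ.IsChain K.Adj) (hu : u ∈ ℓ) (h : (K.neighborSet u).Subsingleton) :
    ℓ.head? = some u ∨ ℓ.getLast? = some u := by
  obtain ⟨s, t, rfl⟩ := List.append_of_mem hu
  rcases List.eq_nil_or_concat s with rfl | ⟨s, a, rfl⟩
  · simp
  rcases t with _ | ⟨b, t⟩
  · simp
  have hinf : [a, u, b] <:+: s.concat a ++ u :: b :: t := ⟨s, t, by simp⟩
  have hc := hch.infix hinf
  have hn := hnd.sublist hinf.sublist
  simp only [List.isChain_cons_cons, List.IsChain.singleton, and_true] at hc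
  simp only [List.nodup_cons, List.mem_cons, not_or, List.not_mem_nil, not_false_eq_true,
    List.nodup_nil, and_self, and_true] at hn
  exact absurd (h hc.1.symm hc.2) hn.1.2

theorem not_subsingleton_of_cycle {ℓ : List V} {u : V} (hnd : ℓ.Nodup)
    (hch : ℓ.IsChain K.Adj) (h3 : 3 ≤ ℓ.length)
    (hcl : ∀ a ∈ ℓ.head?, ∀ b ∈ ℓ.getLast?, K.Adj a b) (hu : u ∈ ℓ) :
    ¬ (K.neighborSet u).Subsingleton := by
  intro h
  wlog hlast : ℓ.getLast? = some u generalizing ℓ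
  · refine this (ℓ := ℓ.reverse) (List.nodup_reverse.mpr hnd) (isChain_reverse_adj.mpr hch)
      (by simpa using h3) (fun a ha b hb => (hcl b (by simpa using hb) a (by simpa using ha)).symm)
      (List.mem_reverse.mpr hu) ?_
    simpa [hlast] using head?_or_getLast?_of_subsingleton hnd hch hu h
  obtain ⟨p, rfl⟩ := List.getLast?_eq_some_iff.mp hlast
  obtain ⟨a, q, rfl⟩ : ∃ a q, p = a :: q := List.exists_cons_of_ne_nil (by rintro rfl; simp at h3)
  obtain ⟨m, b, rfl⟩ : ∃ m b, q = m ++ [b] := by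
    rcases List.eq_nil_or_concat q with rfl | ⟨m, b, rfl⟩
    · simp at h3
    · exact ⟨m, b, List.concat_eq_append⟩
  have hbu : K.Adj b u := by
    have := hch.infix (show [b, u] <:+: a :: (m ++ [b]) ++ [u] from ⟨a :: m, [], by simp⟩)
    simpa using this
  have hau : K.Adj a u := hcl a (by simp) u (List.getLast?_eq_some_iff.mpr ⟨a :: (m ++ [b]), rfl⟩)
  have hab : a ≠ b := by
    intro hab
    subst hab
    simp at hnd
  exact hab (h hau.symm hbu.symm)

theorem subsingleton_neighborSet_of_sup_edge_le [Finite V] {H : SimpleGraph V} {u v : V}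
    (hle : K ⊔ edge u v ≤ H) (huv : u ≠ v) (hn : ¬ K.Adj u v)
    (hdeg : (H.neighborSet u).ncard ≤ 2) : (K.neighborSet u).Subsingleton := by
  intro y hy z hz
  by_contra hyz
  have hvy : v ≠ y := by rintro rfl; exact hn hy
  have hvz : v ≠ z := by rintro rfl; exact hn hz
  have : 2 < (H.neighborSet u).ncard := (Set.two_lt_ncard_iff (Set.toFinite _)).mpr
    ⟨v, y, z, hle (Or.inr ((edge_adj _ _ _ _).mpr ⟨Or.inl ⟨rfl, rfl⟩, huv⟩)), hle (Or.inl hy),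
      hle (Or.inl hz), hvy, hvz, hyz⟩
  omega

end Paths

section Layout

open SimpleGraph

variable {V : Type} {K : SimpleGraph V}

def IsNear (c : List V × Bool) (x y : V) : Prop :=
  Consecutive c.1 x y ∨ c.2 = true ∧
    (c.1.head? = some x ∧ c.1.getLast? = some y ∨ c.1.head? = some y ∧ c.1.getLast? = some x)

theorem IsNear.mem_left {c : List V × Bool} {x y : V} (h : IsNear c x y) : x ∈ c.1 := by
  rcases h with (h | h) | ⟨-, ⟨h, -⟩ | ⟨-, h⟩⟩
  · exact h.subset (by simp)
  · exact h.subset (by simp)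
  · exact List.mem_of_mem_head? h
  · exact List.mem_of_getLast? h

theorem IsNear.symm {c : List V × Bool} {x y : V} (h : IsNear c x y) : IsNear c y x := by
  unfold IsNear Consecutive at *
  tauto

theorem IsNear.mem_right {c : List V × Bool} {x y : V} (h : IsNear c x y) : y ∈ c.1 :=
  h.symm.mem_left

theorem isNear_false {ℓ : List V} {x y : V} : IsNear (ℓ, false) x y ↔ Consecutive ℓ x y := by
  simp [IsNear]

/-- A decomposition of the vertex set into vertex-disjoint paths and cycles of `K` that carry
all edges of `K`. A component `c` is a path, or, when `c.2 = true`, a cycle closed by an edge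
from its last vertex back to its first. -/
structure IsLayout (K : SimpleGraph V) (L : List (List V × Bool)) : Prop where
  nodup : (L.flatMap Prod.fst).Nodup
  mem_flatMap : ∀ x, x ∈ L.flatMap Prod.fst
  isChain : ∀ c ∈ L, c.1.IsChain K.Adj
  three_le_length : ∀ c ∈ L, c.2 = true → 3 ≤ c.1.length
  adj_of_cycle : ∀ c ∈ L, c.2 = true → ∀ a ∈ c.1.head?, ∀ b ∈ c.1.getLast?, K.Adj a b
  exists_isNear : ∀ x y, K.Adj x y → ∃ c ∈ L, IsNear c x y

namespace IsLayout

variable {L M : List (List V × Bool)}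

theorem nodup_of_mem (hL : IsLayout K L) {c : List V × Bool} (hc : c ∈ L) : c.1.Nodup :=
  (List.nodup_flatMap.mp hL.nodup).1 c hc

theorem eq_of_mem_of_mem (hL : IsLayout K L) {c d : List V × Bool} (hc : c ∈ L) (hd : d ∈ L)
    {x : V} (hxc : x ∈ c.1) (hxd : x ∈ d.1) : c = d := by
  by_contra hcd
  have : Std.Symm (fun c d : List V × Bool => List.Disjoint c.1 d.1) := ⟨fun _ _ h => h.symm⟩
  exact (List.nodup_flatMap.mp hL.nodup).2.forall hc hd hcd hxc hxd

theorem perm (hL : IsLayout K L) {L' : List (List V × Bool)} (hLL' : L.Perm L') :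
    IsLayout K L' where
  nodup := (hLL'.flatMap_right Prod.fst).nodup_iff.mp hL.nodup
  mem_flatMap x := (hLL'.flatMap_right Prod.fst).mem_iff.mp (hL.mem_flatMap x)
  isChain c hc := hL.isChain c (hLL'.mem_iff.mpr hc)
  three_le_length c hc := hL.three_le_length c (hLL'.mem_iff.mpr hc)
  adj_of_cycle c hc := hL.adj_of_cycle c (hLL'.mem_iff.mpr hc)
  exists_isNear x y hxy :=
    let ⟨c, hc, h⟩ := hL.exists_isNear x y hxy
    ⟨c, hLL'.mem_iff.mp hc, h⟩

theorem map_reverse (hL : IsLayout K L) : IsLayout K (L.map fun c => (c.1.reverse, c.2)) where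
  nodup := by
    simpa [List.flatMap_map] using
      (List.Perm.flatMap_left L (fun c _ => List.reverse_perm c.1)).nodup_iff.mpr hL.nodup
  mem_flatMap x := by
    simpa [List.flatMap_map] using List.mem_flatMap.mp (hL.mem_flatMap x)
  isChain c hc := by
    obtain ⟨d, hd, rfl⟩ := List.mem_map.mp hc
    exact isChain_reverse_adj.mpr (hL.isChain d hd)
  three_le_length c hc := by
    obtain ⟨d, hd, rfl⟩ := List.mem_map.mp hc
    simpa using hL.three_le_length d hd
  adj_of_cycle c hc := by
    obtain ⟨d, hd, rfl⟩ := List.mem_map.mp hc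
    simp only [List.head?_reverse, List.getLast?_reverse]
    exact fun hcyc a ha b hb => (hL.adj_of_cycle d hd hcyc b hb a ha).symm
  exists_isNear x y hxy := by
    obtain ⟨c, hc, h⟩ := hL.exists_isNear x y hxy
    refine ⟨_, List.mem_map_of_mem hc, ?_⟩
    rcases h with h | ⟨hcyc, h⟩
    · exact Or.inl (h.of_eq_or_reverse (Or.inr rfl))
    · simp only [IsNear, List.head?_reverse, List.getLast?_reverse]
      exact Or.inr ⟨hcyc, by tauto⟩

theorem replace {K' : SimpleGraph V} {N : List (List V × Bool)} {c : List V × Bool}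
    (hL : IsLayout K (N ++ M)) (hle : K ≤ K') (hperm : c.1.Perm (N.flatMap Prod.fst))
    (hchain : c.1.IsChain K'.Adj)
    (hcyc : c.2 = true → 3 ≤ c.1.length ∧ ∀ a ∈ c.1.head?, ∀ b ∈ c.1.getLast?, K'.Adj a b)
    (hnear : ∀ d ∈ N, ∀ x y, IsNear d x y → IsNear c x y)
    (hnew : ∀ x y, K'.Adj x y → ¬ K.Adj x y → IsNear c x y) : IsLayout K' (c :: M) := by
  have hflat : ((c :: M).flatMap Prod.fst).Perm ((N ++ M).flatMap Prod.fst) := by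
    simpa using hperm.append_right _
  refine ⟨hflat.nodup_iff.mpr hL.nodup, fun x => hflat.mem_iff.mpr (hL.mem_flatMap x),
    fun d hd => ?_, fun d hd hd₂ => ?_, fun d hd hd₂ => ?_, fun x y hxy => ?_⟩
  · rcases List.mem_cons.mp hd with rfl | hd
    · exact hchain
    · exact (hL.isChain d (by simp [hd])).imp fun _ _ h => hle h
  · rcases List.mem_cons.mp hd with rfl | hd
    · exact (hcyc hd₂).1
    · exact hL.three_le_length d (by simp [hd]) hd₂
  · rcases List.mem_cons.mp hd with rfl | hd
    · exact (hcyc hd₂).2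
    · exact fun a ha b hb => hle (hL.adj_of_cycle d (by simp [hd]) hd₂ a ha b hb)
  by_cases h : K.Adj x y
  · obtain ⟨d, hd, hxy'⟩ := hL.exists_isNear x y h
    rcases List.mem_append.mp hd with hd | hd
    · exact ⟨c, List.mem_cons_self, hnear d hd x y hxy'⟩
    · exact ⟨d, List.mem_cons_of_mem _ hd, hxy'⟩
  · exact ⟨c, List.mem_cons_self, hnew x y hxy h⟩

theorem join {ℓ₁ ℓ₂ p q : List V} {u v : V}
    (hL : IsLayout K ((ℓ₁, false) :: (ℓ₂, false) :: M))
    (hp : p = ℓ₁ ∨ p = ℓ₁.reverse) (hu : p.getLast? = some u)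
    (hq : q = ℓ₂ ∨ q = ℓ₂.reverse) (hv : q.head? = some v) :
    IsLayout (K ⊔ edge u v) ((p ++ q, false) :: M) := by
  have hperm : (p ++ q).Perm (ℓ₁ ++ ℓ₂) :=
    (List.Perm.of_eq_or_reverse hp).append (List.Perm.of_eq_or_reverse hq)
  have huv : u ≠ v := by
    rintro rfl
    have hnd : (p ++ q).Nodup := hperm.nodup_iff.mpr (hL.nodup.sublist (by simp))
    exact List.disjoint_of_nodup_append hnd (List.mem_of_getLast? hu) (List.mem_of_mem_head? hv)
  have hmono : ∀ ⦃x y⦄, K.Adj x y → (K ⊔ edge u v).Adj x y := fun _ _ h => Or.inl h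
  refine hL.replace (N := [(ℓ₁, false), (ℓ₂, false)]) le_sup_left (by simpa using hperm) ?_
    (by simp) ?_ ?_
  · refine List.IsChain.append ((hL.isChain (ℓ₁, false) (by simp)).of_eq_or_reverse hp |>.imp hmono)
      ((hL.isChain (ℓ₂, false) (by simp)).of_eq_or_reverse hq |>.imp hmono) ?_
    simp only [hu, hv, Option.mem_def, Option.some.injEq, forall_eq']
    exact Or.inr ((edge_adj _ _ _ _).mpr ⟨Or.inl ⟨rfl, rfl⟩, huv⟩)
  · simp only [List.mem_cons, List.not_mem_nil, or_false]
    rintro d (rfl | rfl) x y h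
    · exact isNear_false.mpr
        (((isNear_false.mp h).of_eq_or_reverse hp).mono (List.prefix_append p q).isInfix)
    · exact isNear_false.mpr
        (((isNear_false.mp h).of_eq_or_reverse hq).mono (List.suffix_append p q).isInfix)
  · intro x y hxy hn
    obtain ⟨p', rfl⟩ := List.getLast?_eq_some_iff.mp hu
    obtain ⟨q', rfl⟩ := List.head?_eq_some_iff.mp hv
    refine isNear_false.mpr ?_
    rcases (edge_adj _ _ _ _).mp (hxy.resolve_left hn) with ⟨⟨rfl, rfl⟩ | ⟨rfl, rfl⟩, -⟩
    · exact Or.inl ⟨p', q', by simp⟩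
    · exact Or.inr ⟨p', q', by simp⟩

theorem close {ℓ : List V} {u v : V} (hL : IsLayout K ((ℓ, false) :: M))
    (hu : ℓ.head? = some u) (hv : ℓ.getLast? = some v) (huv : u ≠ v) (hn : ¬ K.Adj u v) :
    IsLayout (K ⊔ edge u v) ((ℓ, true) :: M) := by
  have hchain := hL.isChain (ℓ, false) List.mem_cons_self
  refine hL.replace (N := [(ℓ, false)]) le_sup_left (by simp)
    (hchain.imp fun _ _ h => Or.inl h) (fun _ => ⟨?_, ?_⟩) ?_ ?_
  · obtain ⟨t, rfl⟩ := List.head?_eq_some_iff.mp hu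
    rcases t with _ | ⟨w, _ | ⟨w', t⟩⟩
    · simp_all
    · simp_all
    · simp
  · simp only [hu, hv, Option.mem_def, Option.some.injEq, forall_eq']
    exact Or.inr ((edge_adj _ _ _ _).mpr ⟨Or.inl ⟨rfl, rfl⟩, huv⟩)
  · simp only [List.mem_cons, List.not_mem_nil, or_false]
    rintro d rfl x y h
    exact Or.inl (isNear_false.mp h)
  · intro x y hxy hK
    refine Or.inr ⟨rfl, ?_⟩
    rcases (edge_adj _ _ _ _).mp (hxy.resolve_left hK) with ⟨⟨rfl, rfl⟩ | ⟨rfl, rfl⟩, -⟩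
    · exact Or.inl ⟨hu, hv⟩
    · exact Or.inr ⟨hu, hv⟩

theorem end_of_subsingleton (hL : IsLayout K L) {c : List V × Bool} (hc : c ∈ L) {w : V}
    (hw : w ∈ c.1) (h : (K.neighborSet w).Subsingleton) :
    c.2 = false ∧ (c.1.head? = some w ∨ c.1.getLast? = some w) := by
  refine ⟨?_, head?_or_getLast?_of_subsingleton (hL.nodup_of_mem hc) (hL.isChain c hc) hw h⟩
  by_contra hcyc
  simp only [Bool.not_eq_false] at hcyc
  exact not_subsingleton_of_cycle (hL.nodup_of_mem hc) (hL.isChain c hc)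
    (hL.three_le_length c hc hcyc) (hL.adj_of_cycle c hc hcyc) hw h

theorem exists_sup_edge (hL : IsLayout K L) {u v : V} (huv : u ≠ v)
    (hn : ¬ K.Adj u v) (hu : (K.neighborSet u).Subsingleton)
    (hv : (K.neighborSet v).Subsingleton) : ∃ L', IsLayout (K ⊔ edge u v) L' := by
  obtain ⟨c, hc, huc⟩ := List.mem_flatMap.mp (hL.mem_flatMap u)
  obtain ⟨hcf, hue⟩ := hL.end_of_subsingleton hc huc hu
  obtain ⟨ℓ, b⟩ := c
  obtain rfl : b = false := hcf
  have hL₁ := hL.perm (List.perm_cons_erase hc)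
  by_cases hvc : v ∈ ℓ
  · obtain ⟨-, hve⟩ := hL.end_of_subsingleton hc hvc hv
    rcases hue with hue | hue <;> rcases hve with hve | hve
    · exact absurd (Option.some.inj (hue.symm.trans hve)) huv
    · exact ⟨_, hL₁.close hue hve huv hn⟩
    · exact ⟨_, by rw [edge_comm]; exact hL₁.close hve hue huv.symm (fun h => hn h.symm)⟩
    · exact absurd (Option.some.inj (hue.symm.trans hve)) huv
  obtain ⟨d, hd, hvd⟩ := List.mem_flatMap.mp (hL₁.mem_flatMap v)
  have hd' : d ∈ L.erase (ℓ, false) :=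
    (List.mem_cons.mp hd).resolve_left (by rintro rfl; exact hvc hvd)
  obtain ⟨hdf, hve⟩ := hL.end_of_subsingleton (List.mem_of_mem_erase hd') hvd hv
  obtain ⟨ℓ', b⟩ := d
  obtain rfl : b = false := hdf
  have hL₂ := hL₁.perm ((List.perm_cons_erase hd').cons _)
  obtain ⟨p, hp, hpu⟩ := exists_eq_or_reverse_getLast? hue
  obtain ⟨q, hq, hqv⟩ := exists_eq_or_reverse_getLast? hve
  exact ⟨_, hL₂.join hp hpu (q := q.reverse) (by rcases hq with rfl | rfl <;> simp)
    (by simpa using hqv)⟩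

theorem exists_sup_edge_of_le [Finite V] {H : SimpleGraph V} (hL : IsLayout K L) {u v : V}
    (hle : K ⊔ edge u v ≤ H) (hdeg : ∀ v, (H.neighborSet v).ncard ≤ 2) :
    ∃ L', IsLayout (K ⊔ edge u v) L' := by
  by_cases huv : u = v
  · subst huv
    exact ⟨L, by simpa using hL⟩
  by_cases hn : K.Adj u v
  · exact ⟨L, by rwa [sup_edge_of_adj _ hn]⟩
  exact hL.exists_sup_edge huv hn (subsingleton_neighborSet_of_sup_edge_le hle huv hn (hdeg u))
    (subsingleton_neighborSet_of_sup_edge_le (by rwa [edge_comm]) (Ne.symm huv)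
      (fun h => hn h.symm) (hdeg v))

end IsLayout

theorem isLayout_bot [Fintype V] :
    IsLayout (⊥ : SimpleGraph V) (Finset.univ.toList.map fun v => ([v], false)) where
  nodup := by simpa [List.flatMap_map] using Finset.nodup_toList _
  mem_flatMap x := by simp [List.flatMap_map]
  isChain c hc := by
    obtain ⟨v, -, rfl⟩ := List.mem_map.mp hc
    exact List.IsChain.singleton v
  three_le_length c hc := by
    obtain ⟨v, -, rfl⟩ := List.mem_map.mp hc
    simp
  adj_of_cycle c hc := by
    obtain ⟨v, -, rfl⟩ := List.mem_map.mp hc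
    simp
  exists_isNear x y h := by simp at h

theorem exists_isLayout [Fintype V] (H : SimpleGraph V)
    (hdeg : ∀ v, (H.neighborSet v).ncard ≤ 2) : ∃ L, IsLayout H L := by
  suffices ∀ s : Finset (Sym2 V), fromEdgeSet (s : Set (Sym2 V)) ≤ H →
      ∃ L, IsLayout (fromEdgeSet (s : Set (Sym2 V))) L by
    simpa [fromEdgeSet_edgeSet] using this H.edgeFinset (by simp)
  intro s
  induction s using Finset.induction_on with
  | empty => exact fun _ => ⟨_, by simpa using isLayout_bot⟩
  | insert e s _ ih =>
    intro hle
    obtain ⟨L, hL⟩ := ih ((fromEdgeSet_mono (by simp)).trans hle)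
    induction e using Sym2.ind with
    | _ u v =>
      have heq : fromEdgeSet (insert s(u, v) s : Finset (Sym2 V)) =
          fromEdgeSet (s : Set (Sym2 V)) ⊔ edge u v := by
        rw [Finset.coe_insert, Set.insert_eq, fromEdgeSet_union, edge, sup_comm]
      rw [heq] at hle ⊢
      exact hL.exists_sup_edge_of_le hle hdeg

end Layout

section LayoutIntervals

variable {V : Type} [DecidableEq V] {K : SimpleGraph V}

/-- Vertex number `i` of a component placed at offset `o` gets `[o + i, o + i + 1]`, except that
the last vertex of a cycle spans the whole component, so that it meets the first one. -/
def componentIntervals (c : List V × Bool) (o : ℕ) (x : V) : ℕ × ℕ :=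
  if c.2 = true ∧ c.1.getLast? = some x then (o, o + c.1.length - 1)
  else (o + c.1.idxOf x, o + c.1.idxOf x + 1)

section Component

variable {c : List V × Bool} {o : ℕ} {x y : V}

theorem componentIntervals_bounds (hx : x ∈ c.1) :
    o ≤ (componentIntervals c o x).1 ∧
      (componentIntervals c o x).1 ≤ (componentIntervals c o x).2 ∧
      (componentIntervals c o x).2 ≤ o + c.1.length := by
  have := List.idxOf_lt_length_iff.mpr hx
  unfold componentIntervals
  split_ifs <;> simp only <;> omega

theorem meets_componentIntervals_of_consecutive (hnd : c.1.Nodup) (h : [x, y] <:+: c.1) :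
    Meets (componentIntervals c o x) (componentIntervals c o y) := by
  have hxy := hnd.idxOf_eq_succ_of_infix h
  have hy := List.idxOf_lt_length_iff.mpr (h.subset (by simp : y ∈ [x, y]))
  have hx : ¬ (c.2 = true ∧ c.1.getLast? = some x) := fun h => by
    have := hnd.idxOf_add_one_of_getLast? h.2; omega
  unfold componentIntervals Meets
  rw [if_neg hx]
  split_ifs <;> simp only <;> omega

theorem meets_componentIntervals_of_isNear (hnd : c.1.Nodup) (h3 : c.2 = true → 3 ≤ c.1.length)
    (h : IsNear c x y) : Meets (componentIntervals c o x) (componentIntervals c o y) := by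
  rcases h with (h | h) | ⟨hcyc, h⟩
  · exact meets_componentIntervals_of_consecutive hnd h
  · exact (meets_componentIntervals_of_consecutive hnd h).symm
  suffices ∀ {a b}, c.1.head? = some a → c.1.getLast? = some b →
      Meets (componentIntervals c o a) (componentIntervals c o b) by
    rcases h with ⟨ha, hb⟩ | ⟨ha, hb⟩
    exacts [this ha hb, (this ha hb).symm]
  intro a b ha hb
  have h0 := List.idxOf_eq_zero_of_head? ha
  have hlen := h3 hcyc
  have ha' : ¬ (c.2 = true ∧ c.1.getLast? = some a) := fun h => by
    have := hnd.idxOf_add_one_of_getLast? h.2; omega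
  unfold componentIntervals Meets
  rw [if_neg ha', if_pos ⟨hcyc, hb⟩]
  simp only
  omega

theorem not_meets_componentIntervals (hch : c.1.IsChain K.Adj) (hx : x ∈ c.1) (hy : y ∈ c.1)
    (hxy : x ≠ y) (hn : ¬ K.Adj x y)
    (hlx : ¬ (c.2 = true ∧ c.1.getLast? = some x))
    (hly : ¬ (c.2 = true ∧ c.1.getLast? = some y)) :
    ¬ Meets (componentIntervals c o x) (componentIntervals c o y) := by
  have hne : c.1.idxOf x ≠ c.1.idxOf y := fun h => hxy ((List.idxOf_inj hx).mp h)
  have h₁ : c.1.idxOf y ≠ c.1.idxOf x + 1 := fun h => hn (hch.rel_of_idxOf_eq_succ hy h)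
  have h₂ : c.1.idxOf x ≠ c.1.idxOf y + 1 := fun h => hn (hch.rel_of_idxOf_eq_succ hx h).symm
  unfold componentIntervals Meets
  rw [if_neg hlx, if_neg hly]
  simp only
  omega

end Component

def layoutIntervals : List (List V × Bool) → ℕ → V → ℕ × ℕ
  | [], o, _ => (o, o)
  | c :: L, o, x =>
    if x ∈ c.1 then componentIntervals c o x else layoutIntervals L (o + c.1.length + 1) x

theorem layoutIntervals_bounds (L : List (List V × Bool)) (o : ℕ) (x : V) :
    o ≤ (layoutIntervals L o x).1 ∧ (layoutIntervals L o x).1 ≤ (layoutIntervals L o x).2 := by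
  induction L generalizing o with
  | nil => simp [layoutIntervals]
  | cons c L ih =>
    unfold layoutIntervals
    split_ifs with hx
    · exact ⟨(componentIntervals_bounds hx).1, (componentIntervals_bounds hx).2.1⟩
    · exact ⟨by have := (ih (o + c.1.length + 1)).1; omega, (ih _).2⟩

theorem exists_layoutIntervals_eq {L : List (List V × Bool)} (hnd : (L.flatMap Prod.fst).Nodup)
    {c : List V × Bool} (hc : c ∈ L) (o : ℕ) :
    ∃ o', ∀ x ∈ c.1, layoutIntervals L o x = componentIntervals c o' x := by
  induction L generalizing o with
  | nil => simp at hc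
  | cons d L ih =>
    simp only [List.flatMap_cons, List.nodup_append] at hnd
    rcases List.mem_cons.mp hc with rfl | hc
    · exact ⟨o, fun x hx => by simp [layoutIntervals, hx]⟩
    · obtain ⟨o', ho'⟩ := ih hnd.2.1 hc (o + d.1.length + 1)
      refine ⟨o', fun x hx => ?_⟩
      have hxd : x ∉ d.1 := fun h => hnd.2.2 x h x (List.mem_flatMap.mpr ⟨c, hc, hx⟩) rfl
      simp [layoutIntervals, hxd, ho' x hx]

theorem not_meets_layoutIntervals {L : List (List V × Bool)} {x y : V}
    (hx : x ∈ L.flatMap Prod.fst) (hxy : ∀ c ∈ L, x ∈ c.1 → y ∉ c.1) (o : ℕ) :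
    ¬ Meets (layoutIntervals L o x) (layoutIntervals L o y) := by
  induction L generalizing o with
  | nil => simp at hx
  | cons c L ih =>
    have hsep : ∀ {a b}, a ∈ c.1 → b ∉ c.1 →
        ¬ Meets (layoutIntervals (c :: L) o a) (layoutIntervals (c :: L) o b) := by
      intro a b ha hb
      have := (componentIntervals_bounds (o := o) ha).2.2
      have := (layoutIntervals_bounds L (o + c.1.length + 1) b).1
      simp only [layoutIntervals, ha, hb, if_true, if_false, Meets]
      omega
    by_cases hxc : x ∈ c.1
    · exact hsep hxc (hxy c List.mem_cons_self hxc)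
    by_cases hyc : y ∈ c.1
    · exact fun h => hsep hyc hxc h.symm
    simp only [layoutIntervals, hxc, hyc, if_false]
    exact ih (by simpa [hxc] using hx) (fun d hd => hxy d (List.mem_cons_of_mem _ hd)) _

namespace IsLayout

variable {L : List (List V × Bool)} {x y : V}

theorem meets_of_adj (hL : IsLayout K L) (h : K.Adj x y) :
    Meets (layoutIntervals L 0 x) (layoutIntervals L 0 y) := by
  obtain ⟨c, hc, hnear⟩ := hL.exists_isNear x y h
  obtain ⟨o, ho⟩ := exists_layoutIntervals_eq hL.nodup hc 0
  rw [ho x hnear.mem_left, ho y hnear.mem_right]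
  exact meets_componentIntervals_of_isNear (hL.nodup_of_mem hc) (hL.three_le_length c hc) hnear

theorem exists_cycle_of_meets (hL : IsLayout K L) (hxy : x ≠ y) (hn : ¬ K.Adj x y)
    (h : Meets (layoutIntervals L 0 x) (layoutIntervals L 0 y)) :
    ∃ c ∈ L, c.2 = true ∧ x ∈ c.1 ∧ y ∈ c.1 ∧
      (c.1.getLast? = some x ∨ c.1.getLast? = some y) := by
  by_contra! hno
  by_cases hs : ∃ c ∈ L, x ∈ c.1 ∧ y ∈ c.1
  · obtain ⟨c, hc, hx, hy⟩ := hs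
    obtain ⟨o, ho⟩ := exists_layoutIntervals_eq hL.nodup hc 0
    rw [ho x hx, ho y hy] at h
    have := hno c hc
    exact not_meets_componentIntervals (hL.isChain c hc) hx hy hxy hn (by tauto) (by tauto) h
  · exact not_meets_layoutIntervals (hL.mem_flatMap x) (fun c hc hx hy => hs ⟨c, hc, hx, hy⟩) 0 h

end IsLayout

end LayoutIntervals

theorem exists_natIntervals_of_ncard_neighborSet_le_two {V : Type} [Fintype V]
    (H : SimpleGraph V) (hdeg : ∀ v, (H.neighborSet v).ncard ≤ 2) :
    ∃ p q : V → ℕ × ℕ, (∀ v, (p v).1 ≤ (p v).2) ∧ (∀ v, (q v).1 ≤ (q v).2) ∧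
      H = natIntervalGraph p ⊓ natIntervalGraph q := by
  obtain ⟨L, hL⟩ := exists_isLayout H hdeg
  refine ⟨layoutIntervals L 0, layoutIntervals (L.map fun c => (c.1.reverse, c.2)) 0,
    fun v => (layoutIntervals_bounds _ _ v).2, fun v => (layoutIntervals_bounds _ _ v).2, ?_⟩
  ext x y
  simp only [SimpleGraph.inf_adj, natIntervalGraph]
  refine ⟨fun h => ⟨⟨h.ne, hL.meets_of_adj h⟩, h.ne, hL.map_reverse.meets_of_adj h⟩, ?_⟩
  -- A non-adjacent pair meeting in both families would contain both the last and, since the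
  -- second family reverses each cycle, the first vertex of one cycle; but those are adjacent.
  rintro ⟨⟨hxy, h₁⟩, -, h₂⟩
  by_contra hn
  obtain ⟨c, hc, hcyc, hxc, -, hlast⟩ := hL.exists_cycle_of_meets hxy hn h₁
  obtain ⟨d', hd', -, hxd, -, hhead⟩ := hL.map_reverse.exists_cycle_of_meets hxy hn h₂
  obtain ⟨d, hd, rfl⟩ := List.mem_map.mp hd'
  obtain rfl := hL.eq_of_mem_of_mem hc hd hxc (by simpa using hxd)
  simp only [List.getLast?_reverse] at hhead
  have hne : ∀ {a b}, c.1.head? = some a → c.1.getLast? = some b → a ≠ b :=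
    (hL.nodup_of_mem hc).head?_ne_getLast? (by have := hL.three_le_length c hc hcyc; omega)
  have hadj := hL.adj_of_cycle c hc hcyc
  rcases hhead with hh | hh <;> rcases hlast with hl | hl
  · exact hne hh hl rfl
  · exact hn (hadj x hh y hl)
  · exact hn (hadj y hh x hl).symm
  · exact hne hh hl rfl

section LocalBoxRep

variable {V : Type} [Fintype V] (G : SimpleGraph V)

theorem exists_intervalGraphs_induce (S : Set V)
    (hdeg : ∀ v, ((G.induce S).neighborSet v).ncard ≤ 2) :
    ∃ I : Fin 2 → SimpleGraph V, (∀ j, IsIntervalGraph (I j)) ∧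
      (∀ j, ∀ v ∉ S, IsUniversal (I j) v) ∧
      ∀ u ∈ S, ∀ v ∈ S, (G.Adj u v ↔ ∀ j, (I j).Adj u v) := by
  obtain ⟨p, q, hp, hq, hpq⟩ := exists_natIntervals_of_ncard_neighborSet_le_two _ hdeg
  refine ⟨![natIntervalGraph (extendIntervals S p), natIntervalGraph (extendIntervals S q)],
    fun j => ?_, fun j v hv => ?_, fun u hu v hv => ?_⟩
  · fin_cases j <;> exact isIntervalGraph_natIntervalGraph _
  · fin_cases j
    · exact isUniversal_extendIntervals S p hp hv
    · exact isUniversal_extendIntervals S q hq hv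
  · have := congrArg (fun K => K.Adj ⟨u, hu⟩ ⟨v, hv⟩) hpq
    simp only [SimpleGraph.induce_adj, SimpleGraph.inf_adj, natIntervalGraph, ne_eq,
      Subtype.mk.injEq] at this
    simp only [Fin.forall_fin_two, Matrix.cons_val_zero, Matrix.cons_val_one, natIntervalGraph,
      extendIntervals_of_mem S _ hu, extendIntervals_of_mem S _ hv, this]

theorem localBoxRep_of_cover {ι : Type} [Fintype ι] (S : ι → Set V)
    (hdeg : ∀ i v, ((G.induce (S i)).neighborSet v).ncard ≤ 2)
    (hcover : ∀ u v, ∃ i, u ∈ S i ∧ v ∈ S i) (t : ℕ)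
    (hloc : ∀ v, {i | v ∈ S i}.ncard * 2 ≤ t) : LocalBoxRep G t := by
  choose I hI huniv hadj using fun i => exists_intervalGraphs_induce G (S i) (hdeg i)
  let e := (Fintype.equivFin (ι × Fin 2)).symm
  refine ⟨_, fun k => I (e k).1 (e k).2, fun k => hI _ _, fun u v hne => ⟨?_, ?_⟩, fun v => ?_⟩
  · intro huv k
    by_cases hu : u ∈ S (e k).1
    · by_cases hv : v ∈ S (e k).1
      · exact (hadj _ u hu v hv).1 huv _
      · exact (huniv _ _ v hv u hne).symm
    · exact huniv _ _ u hu v hne.symm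
  · intro h
    obtain ⟨i, hu, hv⟩ := hcover u v
    refine (hadj i u hu v hv).2 fun j => ?_
    simpa using h (e.symm (i, j))
  · calc {k | ¬IsUniversal (I (e k).1 (e k).2) v}.ncard
        ≤ (e ⁻¹' ({i | v ∈ S i} ×ˢ Set.univ)).ncard := by
          refine Set.ncard_le_ncard (fun k hk => ?_)
          by_contra h
          exact hk (huniv _ _ v (by simpa using h))
      _ = {i | v ∈ S i}.ncard * 2 := by
          rw [Set.ncard_preimage_of_injective_subset_range e.injective (by simp),
            Set.ncard_prod, Set.ncard_univ, Nat.card_eq_fintype_card, Fintype.card_fin]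
      _ ≤ t := hloc v

end LocalBoxRep

section Coloring

variable {V : Type}

theorem colorable_of_ncard_neighborSet_le [Fintype V] (G : SimpleGraph V) (Δ : ℕ)
    (hdeg : ∀ v, (G.neighborSet v).ncard ≤ Δ) : G.Colorable (Δ + 1) := by
  suffices ∀ s : Finset V, ∃ col : V → Fin (Δ + 1),
      ∀ u ∈ s, ∀ v ∈ s, G.Adj u v → col u ≠ col v by
    obtain ⟨col, hcol⟩ := this Finset.univ
    exact ⟨.mk col fun huv => hcol _ (Finset.mem_univ _) _ (Finset.mem_univ _) huv⟩
  intro s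
  induction s using Finset.induction_on with
  | empty => exact ⟨fun _ => 0, by simp⟩
  | @insert x s hxs ih =>
    obtain ⟨col, hcol⟩ := ih
    have hused :
        ((s.filter (G.Adj x)).image col).card < (Finset.univ : Finset (Fin (Δ + 1))).card := by
      calc ((s.filter (G.Adj x)).image col).card ≤ (s.filter (G.Adj x)).card := Finset.card_image_le
        _ = ((s.filter (G.Adj x) : Finset V) : Set V).ncard := (Set.ncard_coe_finset _).symm
        _ ≤ (G.neighborSet x).ncard := Set.ncard_le_ncard (fun y hy => by simp_all)
        _ < _ := by simpa using Nat.lt_succ_of_le (hdeg x)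
    obtain ⟨k, -, hk⟩ := Finset.exists_mem_notMem_of_card_lt_card hused
    have hfree : ∀ y ∈ s, G.Adj x y → col y ≠ k := fun y hy hxy hyk =>
      hk (Finset.mem_image.mpr ⟨y, Finset.mem_filter.mpr ⟨hy, hxy⟩, hyk⟩)
    refine ⟨Function.update col x k, ?_⟩
    simp only [Finset.mem_insert]
    rintro u (rfl | hu) v (rfl | hv) huv
    · exact absurd huv (G.loopless.irrefl _)
    · rw [Function.update_self, Function.update_of_ne (G.ne_of_adj huv).symm]
      exact (hfree v hv huv).symm
    · rw [Function.update_self, Function.update_of_ne (G.ne_of_adj huv)]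
      exact hfree u hu huv.symm
    · rw [Function.update_of_ne (ne_of_mem_of_not_mem hu hxs),
        Function.update_of_ne (ne_of_mem_of_not_mem hv hxs)]
      exact hcol u hu v hv huv

theorem SimpleGraph.Coloring.cliqueFree_three_induce {α : Type} {G : SimpleGraph V}
    (C : G.Coloring α) (e : Sym2 α) :
    (G.induce {v | C v ∈ e}).CliqueFree 3 := by
  intro t ht
  obtain ⟨a, b, c, hab, hac, hbc, -⟩ := SimpleGraph.is3Clique_iff.mp ht
  have hmem := fun x : {v | C v ∈ e} => x.2
  induction e using Sym2.ind with
  | _ p q =>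
    have ha := hmem a; have hb := hmem b; have hc := hmem c
    simp only [Set.mem_ofPred_eq, Sym2.mem_iff] at ha hb hc
    have h1 := C.valid hab; have h2 := C.valid hac; have h3 := C.valid hbc
    rcases ha with ha | ha <;> rcases hb with hb | hb <;> rcases hc with hc | hc <;> simp_all

theorem ClawFree.induce {G : SimpleGraph V} (hG : ClawFree G) (S : Set V) :
    ClawFree (G.induce S) := fun v a b c hab hac hbc =>
  hG v a b c (Subtype.coe_injective.ne hab) (Subtype.coe_injective.ne hac)
    (Subtype.coe_injective.ne hbc)

theorem ClawFree.ncard_neighborSet_le_two [Finite V] {G : SimpleGraph V} (hG : ClawFree G)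
    (h3 : G.CliqueFree 3) (v : V) : (G.neighborSet v).ncard ≤ 2 := by
  by_contra! h
  obtain ⟨a, b, c, ha, hb, hc, hab, hac, hbc⟩ := (Set.two_lt_ncard_iff (Set.toFinite _)).mp h
  have htri : ∀ x y, G.Adj v x → G.Adj v y → ¬ G.Adj x y := fun x y hx hy hxy =>
    h3 {v, x, y} (SimpleGraph.is3Clique_triple_iff.mpr ⟨hx, hy, hxy⟩)
  exact hG v a b c hab hac hbc ⟨ha, hb, hc, htri a b ha hb, htri a c ha hc, htri b c hb hc⟩

end Coloring

theorem ncard_setOf_mem_edgeSet_top {α : Type} [Fintype α] (c : α) :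
    {e : (⊤ : SimpleGraph α).edgeSet | c ∈ (e : Sym2 α)}.ncard = Fintype.card α - 1 := by
  rw [← Set.ncard_image_of_injective _ Subtype.val_injective]
  have : Subtype.val '' {e : (⊤ : SimpleGraph α).edgeSet | c ∈ (e : Sym2 α)} =
      (⊤ : SimpleGraph α).incidenceSet c := by
    ext e; simp [SimpleGraph.incidenceSet, and_comm]
  rw [this, ← Nat.card_coe_set_eq, Nat.card_eq_fintype_card,
    SimpleGraph.card_incidenceSet_eq_degree]
  convert SimpleGraph.complete_graph_degree c

theorem exists_mem_edgeSet_top {α : Type} [Nontrivial α] (a b : α) :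
    ∃ e : (⊤ : SimpleGraph α).edgeSet, a ∈ (e : Sym2 α) ∧ b ∈ (e : Sym2 α) := by
  obtain ⟨c, hc⟩ := exists_ne a
  by_cases hab : a = b
  · exact ⟨⟨s(a, c), hc.symm⟩, by simp, by simp [← hab]⟩
  · exact ⟨⟨s(a, b), hab⟩, by simp, by simp⟩

/-- claw-free G with maximum degree Δ ≥ 1 satisfies lbox(G) ≤ 3Δ. -/
theorem stmt7 {V : Type} [Fintype V] (G : SimpleGraph V) (hclaw : ClawFree G)
    (Δ : ℕ) (hΔ : 1 ≤ Δ) (hdeg : ∀ v : V, (G.neighborSet v).ncard ≤ Δ) :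
    lbox G ≤ 3 * Δ := by
  obtain ⟨C⟩ := colorable_of_ncard_neighborSet_le G Δ hdeg
  have : Nontrivial (Fin (Δ + 1)) := Fin.nontrivial_iff_two_le.mpr (by omega)
  let S (e : (⊤ : SimpleGraph (Fin (Δ + 1))).edgeSet) : Set V := {v | C v ∈ (e : Sym2 _)}
  have hdeg₂ : ∀ e v, ((G.induce (S e)).neighborSet v).ncard ≤ 2 := fun e =>
    (hclaw.induce _).ncard_neighborSet_le_two (C.cliqueFree_three_induce e)
  have hloc : ∀ v, {e | v ∈ S e}.ncard * 2 ≤ 3 * Δ := fun v => by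
    have := ncard_setOf_mem_edgeSet_top (C v)
    simp only [Fintype.card_fin, add_tsub_cancel_right] at this
    simp only [S, Set.mem_ofPred_eq, this]
    omega
  exact Nat.sInf_le (localBoxRep_of_cover G S hdeg₂ (fun _ _ => exists_mem_edgeSet_top _ _) _ hloc)
end
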